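/- arXiv:2310.14219 — 3 statements merged into one kernel-verified Lean document; each statement's English description precedes it below -/
import Mathlib

section
/- Let q ≥ 2 and n be integers with n ≥ q + 2 and 2n(2q − 1) ≤ q^3. Then there exists a code C ⊆ {0, 1, …, q−1}^n with minimum Hamming distance at least 3 such that |C| > q^{n−3}. -/
/-!
Fix a prime `p` with `n < p < 2n` (Bertrand) and send a word `x` to its syndrome
`(∑ xᵢ mod (2q - 1), ∑ i xᵢ mod p)`. Two distinct words with equal syndromes cannot differ in at
most two positions `a ≠ b`: the first checksum cannot wrap around, so it forces
`xₐ + x_b = yₐ + y_b`, and then the second one gives `(a - b)(xₐ - yₐ) ≡ 0 mod p`. Hence every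
fibre of the syndrome map is a code of minimum distance `3`, and the largest fibre has more than
`q^n / ((2q - 1)p) > q^(n-3)` words because `(2q - 1)p < 2n(2q - 1) ≤ q³`.
-/

open Finset

theorem Nat.exists_prime_lt_and_lt_two_mul {n : ℕ} (hn : 2 ≤ n) :
    ∃ p, p.Prime ∧ n < p ∧ p < 2 * n := by
  obtain ⟨p, hp, hnp, hp2n⟩ := Nat.exists_prime_lt_and_le_two_mul n (by omega)
  refine ⟨p, hp, hnp, lt_of_le_of_ne hp2n ?_⟩
  rintro rfl
  have := hp.eq_one_or_self_of_dvd 2 (dvd_mul_right 2 n)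
  omega

theorem exists_ne_pair_eq_of_hammingDist_le_two {ι : Type*} [Fintype ι] [DecidableEq ι]
    {β : ι → Type*} [∀ i, DecidableEq (β i)] (hι : 2 ≤ Fintype.card ι) {x y : ∀ i, β i}
    (h : hammingDist x y ≤ 2) : ∃ a b, a ≠ b ∧ ∀ i, i ≠ a ∧ i ≠ b → x i = y i := by
  obtain ⟨t, hdiff, -, ht⟩ :=
    exists_subsuperset_card_eq (subset_univ ({i | x i ≠ y i} : Finset ι)) h (by rwa [card_univ])
  obtain ⟨a, b, hab, rfl⟩ := card_eq_two.mp ht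
  refine ⟨a, b, hab, fun i ⟨hia, hib⟩ => by_contra fun hne => ?_⟩
  have := hdiff (mem_filter.mpr ⟨mem_univ i, hne⟩)
  simp_all

theorem exists_code_of_fibers {ι α β : Type*} [Fintype ι] [DecidableEq ι] [Fintype α]
    [DecidableEq α] [Fintype β] [DecidableEq β] (f : (ι → α) → β) {d m : ℕ}
    (hf : ∀ x y, f x = f y → x ≠ y → d ≤ hammingDist x y)
    (hcard : Fintype.card β * m < Fintype.card α ^ Fintype.card ι) :
    ∃ C : Finset (ι → α), (∀ x ∈ C, ∀ y ∈ C, x ≠ y → d ≤ hammingDist x y) ∧ m < C.card := by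
  obtain ⟨s, hs⟩ := Fintype.exists_lt_card_fiber_of_mul_lt_card (f := f)
    (by rwa [Fintype.card_fun])
  exact ⟨_, fun x hx y hy => hf x y ((mem_filter.1 hx).2.trans (mem_filter.1 hy).2.symm), hs⟩

def syndrome (m p : ℕ) {n q : ℕ} (x : Fin n → Fin q) : ZMod m × ZMod p :=
  (∑ i, ((x i : ℕ) : ZMod m), ∑ i : Fin n, ((i : ℕ) : ZMod p) * ((x i : ℕ) : ZMod p))

section syndrome

variable {m p n q : ℕ} {x y : Fin n → Fin q} {a b : Fin n}

theorem weighted_diff_pair_eq_zero_of_eq_off_pair {R : Type*} [CommRing R] (hab : a ≠ b)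
    (hxy : ∀ i, i ≠ a ∧ i ≠ b → x i = y i) (w : Fin n → R)
    (h : ∑ i, w i * ((x i : ℕ) : R) = ∑ i, w i * ((y i : ℕ) : R)) :
    w a * ((x a : ℕ) - (y a : ℕ) : R) + w b * ((x b : ℕ) - (y b : ℕ) : R) = 0 := by
  rw [← sub_eq_zero, ← sum_sub_distrib, Fintype.sum_eq_add a b hab] at h
  · linear_combination h
  · intro i hi
    rw [hxy i hi, sub_self]

theorem eq_of_syndrome_eq_of_eq_off_pair [Fact p.Prime] (hm : 2 * q - 1 ≤ m) (hnp : n ≤ p)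
    (hqp : q ≤ p) (hab : a ≠ b) (hxy : ∀ i, i ≠ a ∧ i ≠ b → x i = y i)
    (hs : syndrome m p x = syndrome m p y) : x = y := by
  obtain ⟨hs₁, hs₂⟩ := Prod.ext_iff.mp hs
  have hq_pos := (x a).pos
  have hsum : (x a : ℕ) + x b = y a + y b := by
    have := weighted_diff_pair_eq_zero_of_eq_off_pair hab hxy (fun _ => (1 : ZMod m))
      (by simpa [syndrome] using hs₁)
    refine CharP.natCast_injOn_Iio (ZMod m) m ?_ ?_ (by push_cast; linear_combination this)
    all_goals simp only [Set.mem_Iio]; omega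
  have hsum_p : ((x a : ℕ) : ZMod p) + (x b : ℕ) = (y a : ℕ) + (y b : ℕ) := by
    exact_mod_cast congrArg (Nat.cast : ℕ → ZMod p) hsum
  have hprod : ((a : ℕ) - (b : ℕ) : ZMod p) * ((x a : ℕ) - (y a : ℕ)) = 0 := by
    linear_combination weighted_diff_pair_eq_zero_of_eq_off_pair hab hxy
      (fun i => ((i : ℕ) : ZMod p)) hs₂ - ((b : ℕ) : ZMod p) * hsum_p
  have hinj := CharP.natCast_injOn_Iio (ZMod p) p
  have ha : x a = y a := by
    rcases mul_eq_zero.mp hprod with h | h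
    · exact absurd (Fin.ext (hinj (by simp; omega) (by simp; omega) (sub_eq_zero.mp h))) hab
    · exact Fin.ext (hinj (by simp; omega) (by simp; omega) (sub_eq_zero.mp h))
  funext i
  by_cases hia : i = a
  · exact hia ▸ ha
  by_cases hib : i = b
  · subst hib
    exact Fin.ext (by rw [ha] at hsum; omega)
  exact hxy i ⟨hia, hib⟩

theorem three_le_hammingDist_of_syndrome_eq [Fact p.Prime] (hm : 2 * q - 1 ≤ m) (hn : 2 ≤ n)
    (hnp : n ≤ p) (hqp : q ≤ p) (hs : syndrome m p x = syndrome m p y) (hxy : x ≠ y) :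
    3 ≤ hammingDist x y := by
  by_contra! hd
  obtain ⟨a, b, hab, hoff⟩ :=
    exists_ne_pair_eq_of_hammingDist_le_two (by rwa [Fintype.card_fin]) (Nat.le_of_lt_succ hd)
  exact hxy (eq_of_syndrome_eq_of_eq_off_pair hm hnp hqp hab hoff hs)

end syndrome

/-- For integers `q ≥ 2` and `n` with `n ≥ q + 2` and `2n(2q − 1) ≤ q³`,
there is a `q`-ary code of length `n` with minimum Hamming distance at least `3`
of size exceeding `q^{n−3}`. -/
theorem stmt_9 (q n : ℕ) (hq : 2 ≤ q) (hn : q + 2 ≤ n) (h : 2 * n * (2 * q - 1) ≤ q ^ 3) :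
    ∃ C : Finset (Fin n → Fin q),
      (∀ x ∈ C, ∀ y ∈ C, x ≠ y → 3 ≤ hammingDist x y) ∧
      q ^ (n - 3) < C.card := by
  obtain ⟨p, hp, hnp, hp2n⟩ := Nat.exists_prime_lt_and_lt_two_mul (by omega : 2 ≤ n)
  have := Fact.mk hp
  have : NeZero (2 * q - 1) := ⟨by omega⟩
  refine exists_code_of_fibers (syndrome (2 * q - 1) p) (fun x y hs hxy =>
    three_le_hammingDist_of_syndrome_eq le_rfl (by omega) hnp.le (by omega) hs hxy) ?_
  rw [Fintype.card_prod, ZMod.card, ZMod.card, Fintype.card_fin, Fintype.card_fin]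
  have hsyn : (2 * q - 1) * p < q ^ 3 :=
    calc (2 * q - 1) * p < (2 * q - 1) * (2 * n) := Nat.mul_lt_mul_of_pos_left hp2n (by omega)
      _ = 2 * n * (2 * q - 1) := by ring
      _ ≤ q ^ 3 := h
  calc (2 * q - 1) * p * q ^ (n - 3) < q ^ 3 * q ^ (n - 3) :=
        Nat.mul_lt_mul_of_pos_right hsyn (by positivity)
    _ = q ^ n := by rw [← pow_add]; congr 1; omega
end

section
/- For every integer n with 11 ≤ n ≤ 41 there exists a code C ⊆ {0, 1, …, 8}^n (alphabet size 9) with minimum Hamming distance at least 3 such that |C| > 9^{n−3}; equivalently r_9(n, 3) ≤ log_9(17 · 41) < 3. -/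
/-!
Take `C` to be a fibre of the checksum map
`x ↦ (∑ xᵢ mod 17, ∑ i xᵢ mod 41) : [9]ⁿ → ℤ/17 × ℤ/41`; by pigeonhole some fibre has at least
`9ⁿ / 697` words. Two distinct words of a fibre cannot differ in one or two positions: digit
differences lie in `(-9, 9)`, so the first checksum forces them to sum to `0` over the
integers, leaving a single difference `δ ≠ 0` at two distinct positions `i ≠ j < 41`; the second
checksum then gives `(i - j) δ ≡ 0 (mod 41)`, impossible since `41` is prime.
-/

open Finset

theorem Fintype.exists_card_le_card_mul_card_fiber {α β : Type*} [Fintype α] [Fintype β]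
    [DecidableEq β] [Nonempty β] (f : α → β) :
    ∃ y : β, Fintype.card α ≤ Fintype.card β * #{x | f x = y} := by
  have hβ : (0 : ℚ) < Fintype.card β := by exact_mod_cast Fintype.card_pos
  obtain ⟨y, hy⟩ := Fintype.exists_le_card_fiber_of_nsmul_le_card f
    (b := (Fintype.card α : ℚ) / Fintype.card β) (by rw [nsmul_eq_mul, mul_div_cancel₀ _ hβ.ne'])
  exact ⟨y, by exact_mod_cast (div_le_iff₀' hβ).mp hy⟩

theorem sum_sub_sum_eq_sum_filter_ne {ι α G : Type*} [Fintype ι] [DecidableEq α]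
    [AddCommGroup G] (f : ι → α → G) (x y : ι → α) :
    ∑ i, f i (x i) - ∑ i, f i (y i) = ∑ i with x i ≠ y i, (f i (x i) - f i (y i)) := by
  rw [← sum_sub_distrib]
  exact (sum_filter_of_ne (p := fun i => x i ≠ y i)
    fun i _ h hxy => h (by rw [hxy, sub_self])).symm

theorem Int.eq_zero_of_intCast_zmod_eq_zero {m : ℕ} {a : ℤ} (h : (a : ZMod m) = 0)
    (ha : |a| < m) : a = 0 :=
  Int.eq_zero_of_abs_lt_dvd ((ZMod.intCast_zmod_eq_zero_iff_dvd a m).mp h) ha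

theorem abs_natCast_sub_natCast_lt {a b m : ℕ} (ha : a < m) (hb : b < m) :
    |(a : ℤ) - b| < m :=
  abs_sub_lt_iff.mpr ⟨by omega, by omega⟩

theorem intCast_sub_mul_ne_zero {r i j : ℕ} [Fact r.Prime] {d : ℤ} (hij : i ≠ j)
    (hi : i < r) (hj : j < r) (hd : d ≠ 0) (hdr : |d| < r) :
    ((((i : ℤ) - j) * d : ℤ) : ZMod r) ≠ 0 := by
  rw [Int.cast_mul]
  refine mul_ne_zero (fun hzero => hij ?_) (fun hzero => hd ?_)
  · have := Int.eq_zero_of_intCast_zmod_eq_zero hzero (abs_natCast_sub_natCast_lt hi hj)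
    omega
  · exact Int.eq_zero_of_intCast_zmod_eq_zero hzero hdr

def checksum (p r : ℕ) {n q : ℕ} (x : Fin n → Fin q) : ZMod p × ZMod r :=
  (∑ i, ((x i : ℕ) : ZMod p), ∑ i : Fin n, ((i : ℕ) : ZMod r) * ((x i : ℕ) : ZMod r))

theorem intCast_sum_sub_eq_zero_of_checksum_eq {p r n q : ℕ} {x y : Fin n → Fin q}
    (h : checksum p r x = checksum p r y) :
    ((∑ i with x i ≠ y i, ((x i : ℤ) - y i) : ℤ) : ZMod p) = 0 ∧
      ((∑ i with x i ≠ y i, ((i : ℕ) : ℤ) * ((x i : ℤ) - y i) : ℤ) : ZMod r) = 0 := by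
  simp only [checksum, Prod.mk.injEq] at h
  constructor
  · have := sum_sub_sum_eq_sum_filter_ne (fun _ (a : Fin q) => ((a : ℕ) : ZMod p)) x y
    rw [h.1, sub_self] at this
    push_cast
    exact this.symm
  · have := sum_sub_sum_eq_sum_filter_ne
      (fun (i : Fin n) (a : Fin q) => ((i : ℕ) : ZMod r) * ((a : ℕ) : ZMod r)) x y
    rw [h.2, sub_self] at this
    push_cast [mul_sub]
    exact this.symm

/-- `hpq` is `2 (q - 1) < p`: a sum of two digit differences is then determined by its residue
mod `p`. -/
theorem three_le_hammingDist_of_checksum_eq {p r n q : ℕ} [Fact r.Prime]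
    (hpq : 2 * q < p + 2) (hn : n ≤ r) (hq : q ≤ r) {x y : Fin n → Fin q} (hxy : x ≠ y)
    (h : checksum p r x = checksum p r y) : 3 ≤ hammingDist x y := by
  obtain ⟨hsum, hwsum⟩ := intCast_sum_sub_eq_zero_of_checksum_eq h
  obtain ⟨δ, hδdef⟩ : ∃ δ : Fin n → ℤ, ∀ i, (x i : ℤ) - y i = δ i := ⟨_, fun _ => rfl⟩
  simp only [hδdef] at hsum hwsum
  set D : Finset (Fin n) := {i | x i ≠ y i}
  have hδ : ∀ i ∈ D, δ i ≠ 0 := fun i hi hδi =>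
    (mem_filter.mp hi).2 (Fin.ext (by rw [← hδdef, sub_eq_zero] at hδi; exact_mod_cast hδi))
  have hδlt : ∀ i, |δ i| < q := fun i =>
    hδdef i ▸ abs_natCast_sub_natCast_lt (x i).isLt (y i).isLt
  by_contra! hlt
  have hcard : #D = 1 ∨ #D = 2 := by
    have := hammingDist_pos.mpr hxy
    change 0 < #D at this
    change #D < 3 at hlt
    omega
  rcases hcard with hcard | hcard
  · obtain ⟨i, hDi⟩ := card_eq_one.mp hcard
    rw [hDi, sum_singleton] at hsum
    exact hδ i (by simp [hDi])
      (Int.eq_zero_of_intCast_zmod_eq_zero hsum ((hδlt i).trans_le (by omega)))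
  · obtain ⟨i, j, hij, hDij⟩ := card_eq_two.mp hcard
    rw [hDij, sum_pair hij] at hsum hwsum
    have hji : δ j = -δ i := by
      have := Int.eq_zero_of_intCast_zmod_eq_zero hsum (by
        have := abs_add_le (δ i) (δ j)
        linarith [hδlt i, hδlt j, (by exact_mod_cast hpq : (2 * q : ℤ) < p + 2)])
      linarith
    refine intCast_sub_mul_ne_zero (Fin.val_injective.ne hij) (i.isLt.trans_le hn)
      (j.isLt.trans_le hn) (hδ i (by simp [hDij])) ((hδlt i).trans_le (by exact_mod_cast hq)) ?_
    rw [hji] at hwsum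
    push_cast at hwsum ⊢
    linear_combination hwsum

/-- For every `11 ≤ n ≤ 41` there is a `9`-ary code of length `n` with
minimum Hamming distance at least `3` such that `17 · 41 · |C| ≥ 9^n`; in particular
`|C| > 9^{n−3}` (equivalently `r_9(n,3) ≤ log_9(17·41) < 3`). -/
theorem stmt_13 (n : ℕ) (h1 : 11 ≤ n) (h2 : n ≤ 41) :
    ∃ C : Finset (Fin n → Fin 9),
      (∀ x ∈ C, ∀ y ∈ C, x ≠ y → 3 ≤ hammingDist x y) ∧
      9 ^ n ≤ 17 * 41 * C.card ∧
      9 ^ (n - 3) < C.card := by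
  have : Fact (Nat.Prime 41) := ⟨by norm_num⟩
  obtain ⟨b, hb⟩ := Fintype.exists_card_le_card_mul_card_fiber (checksum 17 41 (n := n) (q := 9))
  simp only [Fintype.card_pi, Fintype.card_fin, prod_const, card_univ, Fintype.card_prod,
    ZMod.card] at hb
  refine ⟨univ.filter fun x => checksum 17 41 x = b, fun x hx y hy hxy => ?_, hb, ?_⟩
  · simp only [mem_filter, mem_univ, true_and] at hx hy
    exact three_le_hammingDist_of_checksum_eq (by norm_num) h2 (by norm_num) hxy (hx.trans hy.symm)
  · have h9 : 9 ^ n = 9 ^ (n - 3) * 729 := by rw [← pow_sub_mul_pow 9 (by omega : 3 ≤ n)]; norm_num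
    have := Nat.pow_pos (n := n - 3) (by norm_num : 0 < 9)
    omega
end

section
/- There exists a code C ⊆ {0, 1, …, 31}^37 (alphabet size 32, length 37) with minimum Hamming distance at least 7 such that |C| > 32^30; equivalently A_32(37, 7) > 32^30, so r_32(37, 7) < 7. -/
/-!
The Reed–Solomon code of dimension `31` on all `37` points of `𝔽₃₇` has minimum distance
`37 - 31 + 1 = 7` and `37 ^ 6` cosets. Embed the alphabet `{0, …, 31}` into `𝔽₃₇`: by
pigeonhole some coset contains at least `32 ^ 37 / 37 ^ 6 > 32 ^ 30` words over `{0, …, 31}`, and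
two distinct words in one coset differ by a nonzero codeword, hence in at least `7` places.
-/

open Polynomial Finset Function

section CosetCode

variable {ι α G : Type*} [Fintype ι] [Fintype α] [DecidableEq α] [AddCommGroup G] [Finite G]
  [DecidableEq G]

theorem exists_code_of_index_mul_le (e : α → G) (he : Injective e) (L : AddSubgroup (ι → G))
    {d n : ℕ} (hL : ∀ v ∈ L, v ≠ 0 → d ≤ hammingNorm v)
    (hn : L.index * n ≤ Fintype.card α ^ Fintype.card ι) :
    ∃ C : Finset (ι → α), (∀ x ∈ C, ∀ y ∈ C, x ≠ y → d ≤ hammingDist x y) ∧ n ≤ C.card := by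
  classical
  have := Fintype.ofFinite ((ι → G) ⧸ L)
  let syndrome (x : ι → α) : (ι → G) ⧸ L := QuotientAddGroup.mk (e ∘ x)
  rw [AddSubgroup.index_eq_card, Nat.card_eq_fintype_card, ← Fintype.card_fun] at hn
  obtain ⟨c, hc⟩ := Fintype.exists_le_card_fiber_of_mul_le_card syndrome hn
  refine ⟨({x | syndrome x = c} : Finset (ι → α)), fun x hx y hy hxy => ?_, hc⟩
  simp only [Finset.mem_filter, Finset.mem_univ, true_and] at hx hy
  have hmem : -(e ∘ x) + e ∘ y ∈ L := QuotientAddGroup.eq.mp (hx.trans hy.symm)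
  have hne : -(e ∘ x) + e ∘ y ≠ 0 := by
    rw [Ne, neg_add_eq_zero]
    exact fun h => hxy (funext fun i => he (congrFun h i))
  calc d ≤ hammingNorm (-(e ∘ x) + e ∘ y) := hL _ hmem hne
    _ = hammingDist x y := by
      rw [← hammingDist_eq_hammingNorm]
      exact hammingDist_comp (fun _ => e) (fun _ => he)

end CosetCode

namespace Polynomial

variable {F ι : Type*} [Field F]

noncomputable def evalAt (s : ι → F) : F[X] →ₗ[F] ι → F := LinearMap.pi fun i => leval (s i)

@[simp]
theorem evalAt_apply (s : ι → F) (p : F[X]) (i : ι) : evalAt s p i = p.eval (s i) := rfl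

variable [Fintype ι] {s : ι → F} {k : ℕ}

theorem card_filter_eval_eq_zero_lt [DecidableEq F] (hs : Injective s) {p : F[X]} (hp : p ≠ 0)
    (hpk : p ∈ degreeLT F k) : #{i | p.eval (s i) = 0} < k := by
  have hroots : (Finset.image s {i | p.eval (s i) = 0}).val ⊆ p.roots := by
    intro x hx
    obtain ⟨i, hi, rfl⟩ := Finset.mem_image.mp hx
    exact (mem_roots hp).mpr (Finset.mem_filter.mp hi).2
  calc #{i | p.eval (s i) = 0} = #(Finset.image s {i | p.eval (s i) = 0}) :=
        (Finset.card_image_of_injective _ hs).symm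
    _ ≤ p.natDegree := card_le_degree_of_subset_roots hroots
    _ < k := (natDegree_lt_iff_degree_lt hp).mpr (mem_degreeLT.mp hpk)

theorem injective_evalAt_comp_subtype (hs : Injective s) (hk : k ≤ Fintype.card ι) :
    Injective (evalAt s ∘ₗ (degreeLT F k).subtype) := by
  classical
  rw [← LinearMap.ker_eq_bot, LinearMap.ker_eq_bot']
  rintro ⟨p, hpk⟩ hp
  by_contra hp0
  have hzeros := card_filter_eval_eq_zero_lt hs (fun h => hp0 (Subtype.ext h)) hpk
  have hall : ∀ i, p.eval (s i) = 0 := fun i => congrFun hp i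
  simp only [hall, Finset.filter_true, card_univ] at hzeros
  omega

end Polynomial

section ReedSolomon

variable {F ι : Type*} [Field F]

noncomputable def reedSolomon (s : ι → F) (k : ℕ) : Submodule F (ι → F) :=
  (degreeLT F k).map (evalAt s)

variable [Fintype ι] {s : ι → F} {k : ℕ}

theorem le_hammingNorm_of_mem_reedSolomon [DecidableEq F] (hs : Injective s) {v : ι → F}
    (hv : v ∈ reedSolomon s k) (hv0 : v ≠ 0) : Fintype.card ι + 1 - k ≤ hammingNorm v := by
  obtain ⟨p, hpk, rfl⟩ := Submodule.mem_map.mp hv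
  have hp : p ≠ 0 := by rintro rfl; exact hv0 (map_zero _)
  have hzeros := card_filter_eval_eq_zero_lt hs hp hpk
  have hsplit := Finset.card_filter_add_card_filter_not (s := Finset.univ) fun i => p.eval (s i) = 0
  have hnorm : hammingNorm (evalAt s p) = #{i | ¬p.eval (s i) = 0} := by
    simp only [hammingNorm, evalAt_apply, ne_eq]
    congr
  rw [Finset.card_univ] at hsplit
  omega

theorem natCard_reedSolomon (hs : Injective s) (hk : k ≤ Fintype.card ι) :
    Nat.card (reedSolomon s k) = Nat.card F ^ k := by
  have hrange : LinearMap.range (evalAt s ∘ₗ (degreeLT F k).subtype) = reedSolomon s k := by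
    rw [LinearMap.range_comp, Submodule.range_subtype, reedSolomon]
  rw [← hrange,
    Nat.card_congr (LinearEquiv.ofInjective _ (injective_evalAt_comp_subtype hs hk)).toEquiv.symm,
    Nat.card_congr (degreeLTEquiv F k).toEquiv, Nat.card_fun, Nat.card_fin]

theorem index_reedSolomon [Finite F] (hs : Injective s) (hk : k ≤ Fintype.card ι) :
    (reedSolomon s k).toAddSubgroup.index = Nat.card F ^ (Fintype.card ι - k) := by
  have h := (reedSolomon s k).toAddSubgroup.card_mul_index
  change Nat.card (reedSolomon s k) * _ = _ at h
  rw [natCard_reedSolomon hs hk, Nat.card_fun, Nat.card_eq_fintype_card (α := ι),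
    ← Nat.pow_sub_mul_pow _ hk, mul_comm] at h
  exact Nat.eq_of_mul_eq_mul_right (pow_pos Nat.card_pos k) h

end ReedSolomon

/-- There is a `32`-ary code of length `37` with minimum Hamming distance
at least `7` and more than `32^{30}` codewords; equivalently `A_32(37,7) > 32^{30}`,
so `r_32(37,7) < 7`. -/
theorem stmt_19 :
    ∃ C : Finset (Fin 37 → Fin 32),
      (∀ x ∈ C, ∀ y ∈ C, x ≠ y → 7 ≤ hammingDist x y) ∧
      32 ^ 30 < C.card := by
  have : Fact (Nat.Prime 37) := ⟨by norm_num⟩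
  let s : Fin 37 → ZMod 37 := ZMod.finEquiv 37
  have hs : Injective s := (ZMod.finEquiv 37).injective
  let e : Fin 32 → ZMod 37 := s ∘ Fin.castLE (by norm_num)
  have he : Injective e := hs.comp (Fin.castLE_injective _)
  have hindex : (reedSolomon s 31).toAddSubgroup.index = 37 ^ 6 := by
    rw [index_reedSolomon hs (by simp), Nat.card_zmod, Fintype.card_fin]
  obtain ⟨C, hC, hcard⟩ := exists_code_of_index_mul_le e he (reedSolomon s 31).toAddSubgroup
    (d := 7) (n := 32 ^ 30 + 1)
    (fun v hv hv0 => by simpa using le_hammingNorm_of_mem_reedSolomon hs hv hv0)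
    (by rw [hindex]; norm_num)
  exact ⟨C, hC, hcard⟩
end
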